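/- Let G be a finite simple graph, H a maximal 2-3-subgraph of G, and C a cycle of G none of whose vertices is a branchpoint of H (i.e., no vertex of C has degree 3 in H). Then either V(C) ∩ V(H) consists of exactly one vertex, or V(C) ⊆ V(H). -/

import Mathlib

open SimpleGraph

variable {V : Type*}

/-- The degree of a vertex `v` in a subgraph `H` of a simple graph: the number of
edges of `H` incident to `v`. -/
noncomputable def subDeg {G : SimpleGraph V} (H : G.Subgraph) (v : V) : ℕ :=
  (H.neighborSet v).ncard

/-- `H` is a 2-3-subgraph of `G`: every vertex of `H` has degree exactly 2 or
exactly 3 in `H`. -/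
def Is23Subgraph {G : SimpleGraph V} (H : G.Subgraph) : Prop :=
  ∀ v ∈ H.verts, subDeg H v = 2 ∨ subDeg H v = 3

/-- `H` is a maximal 2-3-subgraph of `G`: it is a 2-3-subgraph and no strictly larger
subgraph of `G` is a 2-3-subgraph. -/
def Maximal23Subgraph {G : SimpleGraph V} (H : G.Subgraph) : Prop :=
  Is23Subgraph H ∧ ∀ H' : G.Subgraph, Is23Subgraph H' → H ≤ H' → H' = H

/-!
If some vertex `y` of `C` lies outside `H`, walk along `C` from `y` in both directions up to the
first vertices `t₁`, `t₂` of `H`. Since no vertex of `C` is a branchpoint, `t₁` and `t₂` have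
degree 2 in `H`; if `t₁ ≠ t₂`, adding the arc `t₁ ⋯ y ⋯ t₂` to `H` keeps every degree in
`{2, 3}`, contradicting maximality. Hence `t₁ = t₂`, and this vertex is all of `V(C) ∩ V(H)`
(it is nonempty, since otherwise `H ∪ C` would be a larger 2-3-subgraph).
-/

variable {G : SimpleGraph V}

namespace SimpleGraph.Walk

theorem IsCycle.append_comm {u v : V} {p : G.Walk u v} {q : G.Walk v u}
    (h : (p.append q).IsCycle) : (q.append p).IsCycle := by
  rw [isCycle_def, isTrail_def, edges_append, tail_support_append] at h ⊢
  obtain ⟨hedges, hne, hsupp⟩ := h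
  refine ⟨List.perm_append_comm.nodup_iff.mp hedges, fun hnil => hne ?_,
    List.perm_append_comm.nodup_iff.mp hsupp⟩
  rw [eq_nil_iff_nil, ← length_eq_zero_iff, length_append] at hnil ⊢
  omega

theorem exists_eq_append_first_mem {S : Set V} {x z : V} (w : G.Walk x z) {a : V}
    (ha : a ∈ w.support) (haS : a ∈ S) :
    ∃ t ∈ S, ∃ (p : G.Walk x t) (r : G.Walk t z), w = p.append r ∧
      ∀ v ∈ p.support, v ∈ S → v = t := by
  induction w with
  | nil =>
    obtain rfl : a = _ := by simpa using ha
    exact ⟨a, haS, nil, nil, rfl, by simp⟩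
  | @cons x b z h q ih =>
    by_cases hx : x ∈ S
    · exact ⟨x, hx, nil, cons h q, rfl, by simp⟩
    rw [support_cons, List.mem_cons] at ha
    obtain ⟨t, htS, p, r, rfl, hfirst⟩ := ih (ha.resolve_left (by rintro rfl; exact hx haS))
    refine ⟨t, htS, cons h p, r, rfl, ?_⟩
    rintro v hv hvS
    rw [support_cons, List.mem_cons] at hv
    rcases hv with rfl | hv
    exacts [absurd hvS hx, hfirst v hv hvS]

theorem IsCycle.exists_arc {S : Set V} {u y : V} {c : G.Walk u u} (hc : c.IsCycle)
    (hy : y ∈ c.support) (hS : ∃ a ∈ c.support, a ∈ S) :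
    ∃ t₁ ∈ S, ∃ t₂ ∈ S, ∃ (P : G.Walk t₂ t₁) (Q : G.Walk t₁ t₂), (P.append Q).IsCycle ∧
      y ∈ P.support ∧ (∀ x, x ∈ (P.append Q).support ↔ x ∈ c.support) ∧
      ∀ v ∈ P.support, v ∈ S → v = t₁ ∨ v = t₂ := by
  obtain ⟨A, B, rfl⟩ := mem_support_iff_exists_append.mp hy
  obtain ⟨a, ha, haS⟩ := hS
  have hsupp : ∀ x, x ∈ (A.append B).support ↔ x ∈ (B.append A).support := by
    simp [mem_support_append_iff, or_comm]
  obtain ⟨t₁, ht₁, p₁, r, hBA, hp₁⟩ := exists_eq_append_first_mem _ ((hsupp a).mp ha) haS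
  obtain ⟨t₂, ht₂, p₂, s, hr, hp₂⟩ :=
    exists_eq_append_first_mem r.reverse r.reverse.end_mem_support ht₁
  have hr' : r = s.reverse.append p₂.reverse := by rw [← reverse_append, ← hr, reverse_reverse]
  have hBA' : B.append A = (p₁.append s.reverse).append p₂.reverse := by
    rw [hBA, hr', append_assoc]
  refine ⟨t₁, ht₁, t₂, ht₂, p₂.reverse.append p₁, s.reverse, ?_, ?_, ?_, ?_⟩
  · rw [← append_assoc]
    exact IsCycle.append_comm (hBA' ▸ hc.append_comm)
  · simp [mem_support_append_iff]
  · intro x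
    rw [hsupp, hBA']
    simp only [mem_support_append_iff, support_reverse, List.mem_reverse]
    tauto
  · intro v hv hvS
    rw [mem_support_append_iff, support_reverse, List.mem_reverse] at hv
    exact hv.elim (fun h => Or.inr (hp₂ v h hvS)) (fun h => Or.inl (hp₁ v h hvS))

theorem IsCycle.inter_eq_singleton_or_exists_isPath {S : Set V} {u y : V} {c : G.Walk u u}
    (hc : c.IsCycle) (hy : y ∈ c.support) (hyS : y ∉ S) (hS : ∃ a ∈ c.support, a ∈ S) :
    (∃ t, {x | x ∈ c.support} ∩ S = {t}) ∨
      ∃ (t₁ t₂ : V) (P : G.Walk t₁ t₂), P.IsPath ∧ t₁ ≠ t₂ ∧ t₁ ∈ S ∧ t₂ ∈ S ∧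
        P.support ⊆ c.support ∧ y ∈ P.support ∧ ∀ v ∈ P.support, v ∈ S → v = t₁ ∨ v = t₂ := by
  obtain ⟨t₁, ht₁, t₂, ht₂, P, Q, hPQ, hyP, hsupp, hint⟩ := hc.exists_arc hy hS
  have hP : ¬ P.Nil := fun h => by
    rw [nil_iff_support_eq.mp h, List.mem_singleton] at hyP
    exact hyS (hyP ▸ ht₂)
  by_cases ht : t₁ = t₂
  · subst ht
    have hQ : Q.Nil := (hPQ.isPath_of_append_right hP).nil_iff_eq.mpr rfl
    refine Or.inl ⟨t₁, Set.eq_singleton_iff_unique_mem.mpr ⟨⟨(hsupp t₁).mp ?_, ht₁⟩, ?_⟩⟩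
    · simp
    rintro x ⟨hx, hxS⟩
    rw [Set.mem_ofPred_eq, ← hsupp, mem_support_append_iff, nil_iff_support_eq.mp hQ] at hx
    exact hx.elim (fun h => (hint x h hxS).elim id id) (by simp)
  · refine Or.inr ⟨t₂, t₁, P, hPQ.isPath_of_append_left (not_nil_of_ne ht), Ne.symm ht, ht₂,
      ht₁, fun x hx => (hsupp x).mp ?_, hyP, fun v hv hvS => (hint v hv hvS).symm⟩
    exact (mem_support_append_iff ..).mpr (Or.inl hx)

theorem IsPath.ncard_neighborSet_toSubgraph_eq_two {u w v : V} {p : G.Walk u w}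
    (hp : p.IsPath) (hv : v ∈ p.support) (hvu : v ≠ u) (hvw : v ≠ w) :
    (p.toSubgraph.neighborSet v).ncard = 2 := by
  obtain ⟨i, rfl, hi⟩ := mem_support_iff_exists_getVert.mp hv
  refine hp.ncard_neighborSet_toSubgraph_internal_eq_two (by rintro rfl; simp at hvu) ?_
  exact lt_of_le_of_ne hi (by rintro rfl; simp at hvw)

end SimpleGraph.Walk

theorem SimpleGraph.Subgraph.neighborSet_eq_empty_of_notMem_verts {H : G.Subgraph} {v : V}
    (hv : v ∉ H.verts) : H.neighborSet v = ∅ :=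
  Set.eq_empty_of_forall_notMem fun _ h => hv h.fst_mem

theorem Is23Subgraph.sup {H K : G.Subgraph} (hH : Is23Subgraph H)
    (hK : ∀ v ∈ K.verts, v ∉ H.verts → (K.neighborSet v).ncard = 2)
    (hHK : ∀ v ∈ K.verts, v ∈ H.verts → subDeg H v = 2 ∧ (K.neighborSet v).ncard = 1) :
    Is23Subgraph (H ⊔ K) := by
  intro v hv
  simp only [subDeg, Subgraph.neighborSet_sup]
  by_cases hvK : v ∈ K.verts
  · by_cases hvH : v ∈ H.verts
    · obtain ⟨hH2, hK1⟩ := hHK v hvK hvH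
      unfold subDeg at hH2
      have hfin : (H.neighborSet v ∪ K.neighborSet v).Finite :=
        (Set.finite_of_ncard_pos (by omega)).union (Set.finite_of_ncard_pos (by omega))
      have hle := Set.ncard_le_ncard (Set.subset_union_left (t := K.neighborSet v)) hfin
      have hge := Set.ncard_union_le (H.neighborSet v) (K.neighborSet v)
      omega
    · rw [Subgraph.neighborSet_eq_empty_of_notMem_verts hvH, Set.empty_union]
      exact Or.inl (hK v hvK hvH)
  · rw [Subgraph.neighborSet_eq_empty_of_notMem_verts hvK, Set.union_empty]
    exact hH v (hv.resolve_right hvK)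

theorem Maximal23Subgraph.verts_subset_of_sup {H K : G.Subgraph} (hH : Maximal23Subgraph H)
    (hHK : Is23Subgraph (H ⊔ K)) : K.verts ⊆ H.verts := by
  rw [← hH.2 _ hHK le_sup_left]
  exact Set.subset_union_right

theorem Maximal23Subgraph.exists_mem_support_of_isCycle {H : G.Subgraph}
    (hH : Maximal23Subgraph H) {u : V} {c : G.Walk u u} (hc : c.IsCycle) :
    ∃ v ∈ c.support, v ∈ H.verts := by
  by_contra! hdisj
  have hsup : Is23Subgraph (H ⊔ c.toSubgraph) :=
    hH.1.sup (fun v hv _ => hc.ncard_neighborSet_toSubgraph_eq_two (c.mem_verts_toSubgraph.mp hv))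
      fun v hv hvH => absurd hvH (hdisj v (c.mem_verts_toSubgraph.mp hv))
  exact hdisj u c.start_mem_support
    (hH.verts_subset_of_sup hsup c.start_mem_verts_toSubgraph)

theorem Maximal23Subgraph.support_subset_of_isPath {H : G.Subgraph}
    (hH : Maximal23Subgraph H) {t₁ t₂ : V} {P : G.Walk t₁ t₂} (hP : P.IsPath) (hne : t₁ ≠ t₂)
    (h₁ : t₁ ∈ H.verts) (h₂ : t₂ ∈ H.verts) (hd₁ : subDeg H t₁ = 2) (hd₂ : subDeg H t₂ = 2)
    (hint : ∀ v ∈ P.support, v ∈ H.verts → v = t₁ ∨ v = t₂) :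
    ∀ v ∈ P.support, v ∈ H.verts := by
  have hPnil : ¬ P.Nil := Walk.not_nil_of_ne hne
  have hsup : Is23Subgraph (H ⊔ P.toSubgraph) := by
    refine hH.1.sup (fun v hv hvH => ?_) (fun v hv hvH => ?_)
    · exact hP.ncard_neighborSet_toSubgraph_eq_two (P.mem_verts_toSubgraph.mp hv)
        (by rintro rfl; exact hvH h₁) (by rintro rfl; exact hvH h₂)
    · rcases hint v (P.mem_verts_toSubgraph.mp hv) hvH with rfl | rfl
      · exact ⟨hd₁, by rw [hP.neighborSet_toSubgraph_startpoint hPnil, Set.ncard_singleton]⟩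
      · exact ⟨hd₂, by rw [hP.neighborSet_toSubgraph_endpoint hPnil, Set.ncard_singleton]⟩
  exact fun v hv => hH.verts_subset_of_sup hsup (P.mem_verts_toSubgraph.mpr hv)

theorem cycle_without_branchpoints_general {G : SimpleGraph V} (H : G.Subgraph)
    (hH : Maximal23Subgraph H) (u : V) (c : G.Walk u u) (hc : c.IsCycle)
    (hnb : ∀ x ∈ c.support, subDeg H x ≠ 3) :
    (∃ w : V, {x | x ∈ c.support} ∩ H.verts = {w}) ∨
      ∀ x ∈ c.support, x ∈ H.verts := by
  by_cases hall : ∀ x ∈ c.support, x ∈ H.verts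
  · exact Or.inr hall
  push Not at hall
  obtain ⟨y, hy, hyH⟩ := hall
  rcases hc.inter_eq_singleton_or_exists_isPath hy hyH (hH.exists_mem_support_of_isCycle hc) with
    hsingle | ⟨t₁, t₂, P, hP, hne, ht₁, ht₂, hPc, hyP, hint⟩
  · exact Or.inl hsingle
  have hdeg : ∀ t ∈ c.support, t ∈ H.verts → subDeg H t = 2 := fun t htc htH =>
    (hH.1 t htH).resolve_right (hnb t htc)
  exact absurd (hH.support_subset_of_isPath hP hne ht₁ ht₂ (hdeg t₁ (hPc P.start_mem_support) ht₁)
    (hdeg t₂ (hPc P.end_mem_support) ht₂) hint y hyP) hyH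

/-- Let `H` be a maximal 2-3-subgraph of a finite graph `G` and let `C` be a cycle of
`G` none of whose vertices is a branchpoint of `H`. Then `C` intersects `V(H)` in
exactly one vertex, or `V(C) ⊆ V(H)`. -/
theorem cycle_without_branchpoints [Fintype V] {G : SimpleGraph V} (H : G.Subgraph)
    (hH : Maximal23Subgraph H) (u : V) (c : G.Walk u u) (hc : c.IsCycle)
    (hnb : ∀ x ∈ c.support, subDeg H x ≠ 3) :
    (∃ w : V, {x | x ∈ c.support} ∩ H.verts = {w}) ∨
      ∀ x ∈ c.support, x ∈ H.verts :=
  cycle_without_branchpoints_general H hH u c hc hnb
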